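/- arXiv:1301.6752 — 3 statements merged into one kernel-verified Lean document; each statement's English description precedes it below -/
import Mathlib

section
/- Let A ∈ ℂ^{m×n} and B ∈ ℂ^{m×m}. Then: (a) there exists a Hermitian X ∈ ℂ^{n×n} such that AXA* ⪰ BB* if and only if ℛ(B) ⊆ ℛ(A); (b) there exists a Hermitian X ∈ ℂ^{n×n} such that AXA* ≻ BB* if and only if r(A) = m. -/
open Matrix ComplexOrder

/-- The matrix of the orthogonal projection of `ℂ^m` onto the subspace `U`. -/
noncomputable def projMat {m : ℕ} (U : Submodule ℂ (EuclideanSpace ℂ (Fin m))) :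
    Matrix (Fin m) (Fin m) ℂ :=
  Matrix.toEuclideanLin.symm (U.subtype ∘ₗ (U.orthogonalProjection).toLinearMap)

/-- `E_A`: orthogonal projection onto the orthogonal complement of the column space of `A`. -/
noncomputable def eProj {m p : ℕ} (A : Matrix (Fin m) (Fin p) ℂ) : Matrix (Fin m) (Fin m) ℂ :=
  projMat (LinearMap.range (Matrix.toEuclideanLin A))ᗮ

/-- `F_B`: orthogonal projection onto the kernel of `B`. -/
noncomputable def fProj {q m : ℕ} (B : Matrix (Fin q) (Fin m) ℂ) : Matrix (Fin m) (Fin m) ℂ :=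
  projMat (LinearMap.ker (Matrix.toEuclideanLin B))

/-- `i₊`: the number of positive eigenvalues of a Hermitian matrix, with multiplicity. -/
noncomputable def iPos {ι : Type} [Fintype ι] [DecidableEq ι] (A : Matrix ι ι ℂ) : ℕ :=
  if h : A.IsHermitian then Nat.card {i : ι // 0 < h.eigenvalues i} else 0

/-- `i₋`: the number of negative eigenvalues of a Hermitian matrix, with multiplicity. -/
noncomputable def iNeg {ι : Type} [Fintype ι] [DecidableEq ι] (A : Matrix ι ι ℂ) : ℕ :=
  if h : A.IsHermitian then Nat.card {i : ι // h.eigenvalues i < 0} else 0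

/-! If `AXAᴴ - BBᴴ ⪰ 0` and `Aᴴv = 0`, then `‖Bᴴv‖² = -vᴴ(AXAᴴ - BBᴴ)v ≤ 0`, so
`ker Aᴴ ⊆ ker Bᴴ`, which dualizes to `ℛ(B) ⊆ ℛ(A)`. Conversely, `B = AC` gives `A(CCᴴ)Aᴴ = BBᴴ`.
If `AXAᴴ ≻ BBᴴ ⪰ 0` then `AXAᴴ` is invertible, so `A` has full row rank; and when `A` is
surjective, solving `AC = B` and `AD = 1` yields `A(CCᴴ + DDᴴ)Aᴴ - BBᴴ = 1 ≻ 0`. -/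

theorem LinearMap.exists_comp_eq_of_ker_le {K V W W' : Type*} [DivisionRing K]
    [AddCommGroup V] [Module K V] [AddCommGroup W] [Module K W] [AddCommGroup W'] [Module K W']
    {f : V →ₗ[K] W} {g : V →ₗ[K] W'} (h : ker f ≤ ker g) : ∃ k : W →ₗ[K] W', k ∘ₗ f = g := by
  obtain ⟨k, hk⟩ :=
    LinearMap.exists_extend ((ker f).liftQ g h ∘ₗ f.quotKerEquivRange.symm.toLinearMap)
  refine ⟨k, LinearMap.ext fun v => ?_⟩
  have := LinearMap.congr_fun hk ⟨f v, mem_range_self f v⟩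
  simpa [LinearMap.quotKerEquivRange_symm_apply_image] using this

namespace Matrix

variable {K : Type*} {l m n : Type*}

theorem exists_mul_eq_of_range_mulVecLin_le [CommSemiring K] [Fintype n] [Fintype l]
    [DecidableEq l]
    {A : Matrix m n K} {B : Matrix m l K}
    (h : LinearMap.range B.mulVecLin ≤ LinearMap.range A.mulVecLin) :
    ∃ C : Matrix n l K, A * C = B := by
  have hcol : ∀ j, ∃ c : n → K, A *ᵥ c = B.col j := fun j =>
    h ⟨Pi.single j 1, by simp⟩
  choose c hc using hcol
  refine ⟨(of c)ᵀ, ext fun i j => ?_⟩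
  simpa [mul_apply, mulVec, dotProduct, mul_comm] using congrFun (hc j) i

theorem range_mulVecLin_mul_le [CommSemiring K] [Fintype n] [Fintype l]
    (A : Matrix m n K) (C : Matrix n l K) :
    LinearMap.range (A * C).mulVecLin ≤ LinearMap.range A.mulVecLin := by
  rw [mulVecLin_mul]
  exact LinearMap.range_comp_le_range _ _

theorem range_mulVecLin_le_of_ker_conjTranspose_le [Field K] [StarRing K] [Fintype m] [Fintype n]
    [Fintype l] [DecidableEq m] [DecidableEq n]
    {A : Matrix m n K} {B : Matrix m l K}
    (h : LinearMap.ker Aᴴ.mulVecLin ≤ LinearMap.ker Bᴴ.mulVecLin) :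
    LinearMap.range B.mulVecLin ≤ LinearMap.range A.mulVecLin := by
  obtain ⟨k, hk⟩ := LinearMap.exists_comp_eq_of_ker_le h
  have hBK : Bᴴ = LinearMap.toMatrix' k * Aᴴ :=
    toLin'.injective (by rw [toLin'_mul, toLin'_toMatrix']; exact hk.symm)
  have hB : B = A * (LinearMap.toMatrix' k)ᴴ := by
    rw [← conjTranspose_conjTranspose B, hBK, conjTranspose_mul, conjTranspose_conjTranspose]
  exact hB ▸ range_mulVecLin_mul_le _ _

theorem ker_mulVecLin_le_of_posSemidef_sub [CommRing K] [PartialOrder K] [StarRing K]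
    [StarOrderedRing K] [NoZeroDivisors K] [Fintype m] [Fintype l]
    {M : Matrix m m K} {B : Matrix m l K} (h : (M - B * Bᴴ).PosSemidef) :
    LinearMap.ker M.mulVecLin ≤ LinearMap.ker Bᴴ.mulVecLin := by
  intro v hv
  rw [LinearMap.mem_ker, mulVecLin_apply] at hv ⊢
  have hle : star (Bᴴ *ᵥ v) ⬝ᵥ (Bᴴ *ᵥ v) ≤ 0 := by
    have := h.dotProduct_mulVec_nonneg v
    rw [star_mulVec, conjTranspose_conjTranspose]
    rwa [sub_mulVec, dotProduct_sub, hv, dotProduct_zero, zero_sub, neg_nonneg,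
      ← mulVec_mulVec, dotProduct_mulVec] at this
  exact dotProduct_star_self_eq_zero.mp (le_antisymm hle (dotProduct_star_self_nonneg _))

theorem mul_mul_conjTranspose_mul_self [Semiring K] [StarRing K] [Fintype n] [Fintype l]
    (A : Matrix m n K) (C : Matrix n l K) :
    A * (C * Cᴴ) * Aᴴ = A * C * (A * C)ᴴ := by
  simp only [conjTranspose_mul, Matrix.mul_assoc]

theorem exists_isHermitian_mul_mul_conjTranspose_eq [CommSemiring K] [StarRing K] [Fintype n]
    [Fintype l] [DecidableEq l]
    {A : Matrix m n K} {B : Matrix m l K}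
    (h : LinearMap.range B.mulVecLin ≤ LinearMap.range A.mulVecLin) :
    ∃ X : Matrix n n K, X.IsHermitian ∧ A * X * Aᴴ = B * Bᴴ := by
  obtain ⟨C, rfl⟩ := exists_mul_eq_of_range_mulVecLin_le h
  exact ⟨C * Cᴴ, isHermitian_mul_conjTranspose_self C, mul_mul_conjTranspose_mul_self A C⟩

theorem rank_eq_card_of_posDef_mul_mul_conjTranspose [Field K] [PartialOrder K] [StarRing K]
    [Fintype m] [Fintype n] [DecidableEq m]
    {A : Matrix m n K} {X : Matrix n n K} (h : (A * X * Aᴴ).PosDef) :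
    A.rank = Fintype.card m :=
  le_antisymm A.rank_le_card_height <| by
    calc Fintype.card m = (A * X * Aᴴ).rank := (rank_of_isUnit _ h.isUnit).symm
      _ ≤ A.rank := (rank_mul_le_left _ _).trans (rank_mul_le_left _ _)

end Matrix

theorem stmt8 {m n : ℕ} (A : Matrix (Fin m) (Fin n) ℂ) (B : Matrix (Fin m) (Fin m) ℂ) :
    ((∃ X : Matrix (Fin n) (Fin n) ℂ, X.IsHermitian ∧ (A * X * Aᴴ - B * Bᴴ).PosSemidef) ↔
        LinearMap.range B.mulVecLin ≤ LinearMap.range A.mulVecLin) ∧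
      ((∃ X : Matrix (Fin n) (Fin n) ℂ, X.IsHermitian ∧ (A * X * Aᴴ - B * Bᴴ).PosDef) ↔
        A.rank = m) := by
  refine ⟨⟨fun ⟨X, _, hX⟩ => ?_, fun h => ?_⟩, ⟨fun ⟨X, _, hX⟩ => ?_, fun h => ?_⟩⟩
  · refine range_mulVecLin_le_of_ker_conjTranspose_le
      (le_trans ?_ (ker_mulVecLin_le_of_posSemidef_sub hX))
    rw [mulVecLin_mul]
    exact LinearMap.ker_le_ker_comp _ _
  · obtain ⟨X, hX, hXB⟩ := exists_isHermitian_mul_mul_conjTranspose_eq h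
    refine ⟨X, hX, ?_⟩
    rw [hXB, sub_self]
    exact PosSemidef.zero
  · have hP : (A * X * Aᴴ).PosDef := by
      simpa using hX.add_posSemidef (posSemidef_self_mul_conjTranspose B)
    simpa using rank_eq_card_of_posDef_mul_mul_conjTranspose hP
  · have hA : LinearMap.range A.mulVecLin = ⊤ :=
      Submodule.eq_top_of_finrank_eq (by rw [Module.finrank_fin_fun]; exact h)
    obtain ⟨X₁, hX₁, hB⟩ :=
      exists_isHermitian_mul_mul_conjTranspose_eq (B := B) (le_top.trans hA.ge)
    obtain ⟨X₂, hX₂, h1⟩ := exists_isHermitian_mul_mul_conjTranspose_eq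
      (B := (1 : Matrix (Fin m) (Fin m) ℂ)) (le_top.trans hA.ge)
    refine ⟨X₁ + X₂, hX₁.add hX₂, ?_⟩
    rw [Matrix.mul_add, Matrix.add_mul, hB, h1, conjTranspose_one, Matrix.mul_one,
      add_sub_cancel_left]
    exact PosDef.one
end

section
/- Let A ∈ ℂ^{m×n} and B ∈ ℂ^{m×m}. Then: (a) there exists X ∈ ℂ^{n×n} such that AX ≠ 0 and AXX*A* ⪯ BB* if and only if ℛ(A) ∩ ℛ(B) ≠ {0}; (b) there exists X ∈ ℂ^{n×n} such that AX ≠ 0 and AXX*A* ≺ BB* if and only if A ≠ 0 and r(B) = m. -/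
/-!
If `A X Xᴴ Aᴴ ⪯ B Bᴴ`, every `x` with `Bᴴ x = 0` satisfies `‖(A X)ᴴ x‖² ≤ ‖Bᴴ x‖² = 0`, so
`ker Bᴴ ⊆ ker (A X)ᴴ` and, taking orthogonal complements, `ℛ(A X) ⊆ ℛ(B)`; as `ℛ(A X) ⊆ ℛ(A)` is
nonzero, `ℛ(A) ∩ ℛ(B) ≠ {0}`. If the inequality is strict, `B Bᴴ ≻ 0`, so `r(B) = m`.

Conversely, let `0 ≠ y = A u = B v` and `ρ = (1 + ‖v‖²)⁻¹`. For `X = u dᵀ` with `‖d‖² = ρ` we get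
`B Bᴴ - A X Xᴴ Aᴴ = B (I - ρ v vᴴ) Bᴴ`, and `I - ρ v vᴴ = (I + v vᴴ)⁻¹ ≻ 0` (Sherman–Morrison).
Hence the difference is `⪰ 0`, and `≻ 0` when `B` is invertible; if `r(B) = m`, any `A ≠ 0` has a
nonzero column in `ℛ(A) ∩ ℛ(B) = ℛ(A)`.
-/

open Matrix ComplexOrder

namespace Matrix

variable {𝕜 : Type*} [RCLike 𝕜] {l m n : Type*} [Fintype l] [Fintype n]

theorem mul_mul_conjTranspose_mul_conjTranspose {k : Type*} [Fintype k] (A : Matrix m k 𝕜)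
    (X : Matrix k n 𝕜) : A * X * Xᴴ * Aᴴ = A * X * (A * X)ᴴ := by
  rw [conjTranspose_mul, Matrix.mul_assoc (A * X)]

theorem range_mulVecLin_ne_bot {A : Matrix m n 𝕜} (hA : A ≠ 0) :
    LinearMap.range A.mulVecLin ≠ ⊥ := by
  classical
  rw [Ne, LinearMap.range_eq_bot, ← toLin'_apply']
  exact (LinearEquiv.map_ne_zero_iff _).mpr hA

theorem range_mulVecLin_eq_top_of_rank_eq_card {K : Type*} [Field K] [Fintype m]
    {B : Matrix m n K} (h : B.rank = Fintype.card m) : LinearMap.range B.mulVecLin = ⊤ :=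
  Submodule.eq_top_of_finrank_eq (by simpa [rank] using h)

theorem star_dotProduct_mulVec_eq_zero_of_conjTranspose_mulVec_eq_zero [Fintype m]
    {B : Matrix m n 𝕜} {x : m → 𝕜} (hx : Bᴴ *ᵥ x = 0) (z : n → 𝕜) : star x ⬝ᵥ B *ᵥ z = 0 := by
  rw [dotProduct_mulVec, ← conjTranspose_conjTranspose B, ← star_mulVec, hx, star_zero,
    zero_dotProduct]

theorem mem_range_mulVecLin_iff [Fintype m] {B : Matrix m n 𝕜} {y : m → 𝕜} :
    y ∈ LinearMap.range B.mulVecLin ↔ ∀ x, Bᴴ *ᵥ x = 0 → star x ⬝ᵥ y = 0 := by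
  classical
  refine ⟨?_, fun h => ?_⟩
  · rintro ⟨z, rfl⟩ x hx
    exact star_dotProduct_mulVec_eq_zero_of_conjTranspose_mulVec_eq_zero hx z
  have hrange : LinearMap.range B.toEuclideanLin = (LinearMap.ker Bᴴ.toEuclideanLin)ᗮ := by
    rw [LinearMap.orthogonal_ker, ← toEuclideanLin_conjTranspose_eq_adjoint,
      conjTranspose_conjTranspose]
  have hy : WithLp.toLp 2 y ∈ LinearMap.range B.toEuclideanLin := by
    rw [hrange, Submodule.mem_orthogonal]
    intro x hx
    simpa [EuclideanSpace.inner_eq_star_dotProduct, dotProduct_comm] using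
      h x.ofLp (by simpa using congrArg WithLp.ofLp (LinearMap.mem_ker.mp hx))
  obtain ⟨z, hz⟩ := hy
  exact ⟨z.ofLp, by simpa using congrArg WithLp.ofLp hz⟩

theorem range_mulVecLin_le_of_posSemidef_sub [Fintype m] {B : Matrix m l 𝕜} {C : Matrix m n 𝕜}
    (h : (B * Bᴴ - C * Cᴴ).PosSemidef) :
    LinearMap.range C.mulVecLin ≤ LinearMap.range B.mulVecLin := by
  rintro _ ⟨z, rfl⟩
  refine mem_range_mulVecLin_iff.mpr fun x hx => ?_
  have hquad : star x ⬝ᵥ (B * Bᴴ - C * Cᴴ) *ᵥ x = -(star (Cᴴ *ᵥ x) ⬝ᵥ Cᴴ *ᵥ x) := by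
    rw [sub_mulVec, dotProduct_sub, ← mulVec_mulVec, ← mulVec_mulVec, hx, mulVec_zero,
      dotProduct_zero, zero_sub, dotProduct_mulVec, star_mulVec, conjTranspose_conjTranspose]
  have hCx : Cᴴ *ᵥ x = 0 := by
    have := h.dotProduct_mulVec_nonneg x
    rw [hquad, neg_nonneg] at this
    exact dotProduct_star_self_eq_zero.mp (le_antisymm this (dotProduct_star_self_nonneg _))
  exact star_dotProduct_mulVec_eq_zero_of_conjTranspose_mulVec_eq_zero hCx z

theorem posDef_one_sub_inv_smul_vecMulVec [DecidableEq l] (v : l → 𝕜) :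
    (1 - (1 + star v ⬝ᵥ v)⁻¹ • vecMulVec v (star v)).PosDef := by
  set ρ := (1 + star v ⬝ᵥ v)⁻¹
  have hρ : ρ * (star v ⬝ᵥ v) = 1 - ρ := by
    have : ρ * (1 + star v ⬝ᵥ v) = 1 :=
      inv_mul_cancel₀ (add_pos_of_pos_of_nonneg one_pos (dotProduct_star_self_nonneg v)).ne'
    linear_combination this
  have hinv : (1 + vecMulVec v (star v))⁻¹ = 1 - ρ • vecMulVec v (star v) := by
    refine inv_eq_right_inv ?_
    rw [add_mul, one_mul, mul_sub, mul_one, mul_smul_comm, vecMulVec_mul_vecMulVec,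
      vecMulVec_smul, smul_smul, hρ]
    module
  rw [← hinv]
  exact (PosDef.one.add_posSemidef (posSemidef_vecMulVec_self_star v)).inv

theorem exists_sub_eq_mul_posDef_mul_conjTranspose {A : Matrix m n 𝕜} {B : Matrix m l 𝕜}
    (h : LinearMap.range A.mulVecLin ⊓ LinearMap.range B.mulVecLin ≠ ⊥) :
    ∃ X : Matrix n n 𝕜, A * X ≠ 0 ∧
      ∃ M : Matrix l l 𝕜, M.PosDef ∧ B * Bᴴ - A * X * Xᴴ * Aᴴ = B * M * Bᴴ := by
  classical
  obtain ⟨y, hy, hy0⟩ := (Submodule.ne_bot_iff _).mp h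
  obtain ⟨⟨u, rfl⟩, ⟨v, hv⟩⟩ := Submodule.mem_inf.mp hy
  rw [mulVecLin_apply] at hv hy0
  obtain ⟨i, hi⟩ := Function.ne_iff.mp hy0
  obtain ⟨j, -⟩ : ∃ j, u j ≠ 0 := by
    by_contra! hu
    exact hy0 (by rw [show u = 0 from funext hu, mulVec_zero])
  set ρ := (1 + star v ⬝ᵥ v)⁻¹
  have hρ : 0 < ρ := Right.inv_pos.mpr
    (add_pos_of_pos_of_nonneg one_pos (dotProduct_star_self_nonneg v))
  obtain ⟨r, hr0, hr⟩ := RCLike.nonneg_iff_exists_ofReal.mp hρ.le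
  set w : 𝕜 := (Real.sqrt r : 𝕜)
  have hw : w * star w = ρ := by
    rw [RCLike.star_def, RCLike.conj_ofReal, ← RCLike.ofReal_mul, Real.mul_self_sqrt hr0, hr]
  set d : n → 𝕜 := Pi.single j w
  have hd : d ⬝ᵥ star d = ρ := by
    rw [← hw]
    simp [d]
  refine ⟨vecMulVec u d, fun h0 => ?_, 1 - ρ • vecMulVec v (star v),
    posDef_one_sub_inv_smul_vecMulVec v, ?_⟩
  · have hw0 : w ≠ 0 := fun hw0 => hρ.ne' (by rw [← hw, hw0, zero_mul])
    have hij := congrFun₂ h0 i j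
    rw [mul_vecMulVec, vecMulVec_apply, zero_apply,
      show d j = w from Pi.single_eq_same (M := fun _ => 𝕜) j w] at hij
    exact hi ((mul_eq_zero.mp hij).resolve_right hw0)
  · have hAX : A * vecMulVec u d * (vecMulVec u d)ᴴ * Aᴴ
        = ρ • vecMulVec (A *ᵥ u) (star (A *ᵥ u)) := by
      rw [mul_mul_conjTranspose_mul_conjTranspose, mul_vecMulVec,
        conjTranspose_vecMulVec, vecMulVec_mul_vecMulVec, hd, vecMulVec_smul]
    have hB : B * (ρ • vecMulVec v (star v)) * Bᴴ = ρ • vecMulVec (B *ᵥ v) (star (B *ᵥ v)) := by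
      rw [Matrix.mul_smul, Matrix.smul_mul, mul_vecMulVec, vecMulVec_mul, ← star_mulVec]
    rw [Matrix.mul_sub, Matrix.sub_mul, Matrix.mul_one, hAX, hB, hv, mulVecLin_apply]

end Matrix

theorem stmt11 {m n : ℕ} (A : Matrix (Fin m) (Fin n) ℂ) (B : Matrix (Fin m) (Fin m) ℂ) :
    ((∃ X : Matrix (Fin n) (Fin n) ℂ,
        A * X ≠ 0 ∧ (B * Bᴴ - A * X * Xᴴ * Aᴴ).PosSemidef) ↔
          LinearMap.range A.mulVecLin ⊓ LinearMap.range B.mulVecLin ≠ ⊥) ∧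
      ((∃ X : Matrix (Fin n) (Fin n) ℂ,
        A * X ≠ 0 ∧ (B * Bᴴ - A * X * Xᴴ * Aᴴ).PosDef) ↔
          A ≠ 0 ∧ B.rank = m) := by
  refine ⟨⟨?_, ?_⟩, ⟨?_, ?_⟩⟩
  · rintro ⟨X, hAX, hpsd⟩
    rw [mul_mul_conjTranspose_mul_conjTranspose] at hpsd
    refine ne_bot_of_le_ne_bot (range_mulVecLin_ne_bot hAX)
      (le_inf ?_ (range_mulVecLin_le_of_posSemidef_sub hpsd))
    rw [mulVecLin_mul]
    exact LinearMap.range_comp_le_range _ _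
  · intro h
    obtain ⟨X, hAX, M, hM, hX⟩ := exists_sub_eq_mul_posDef_mul_conjTranspose h
    exact ⟨X, hAX, hX ▸ hM.posSemidef.mul_mul_conjTranspose_same B⟩
  · rintro ⟨X, hAX, hpd⟩
    refine ⟨fun hA => hAX (by rw [hA, Matrix.zero_mul]), ?_⟩
    rw [mul_mul_conjTranspose_mul_conjTranspose] at hpd
    have hBB : (B * Bᴴ).PosDef := by
      simpa using hpd.add_posSemidef (posSemidef_self_mul_conjTranspose (A * X))
    rw [← rank_self_mul_conjTranspose, rank_of_isUnit _ hBB.isUnit, Fintype.card_fin]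
  · rintro ⟨hA, hB⟩
    have htop : LinearMap.range B.mulVecLin = ⊤ :=
      range_mulVecLin_eq_top_of_rank_eq_card (by rw [hB, Fintype.card_fin])
    have hBunit : IsUnit B := mulVec_surjective_iff_isUnit.mp (LinearMap.range_eq_top.mp htop)
    have hne : LinearMap.range A.mulVecLin ⊓ LinearMap.range B.mulVecLin ≠ ⊥ := by
      rw [htop, inf_top_eq]
      exact range_mulVecLin_ne_bot hA
    obtain ⟨X, hAX, M, hM, hX⟩ := exists_sub_eq_mul_posDef_mul_conjTranspose hne
    exact ⟨X, hAX, hX ▸ hBunit.posDef_star_right_conjugate_iff.mpr hM⟩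
end

section
/- Let A ∈ ℂ^{m×m} be Hermitian, let P ∈ ℂ^{m×n}, and let Q denote the m×m matrix of the orthogonal projection of ℂ^m (with the standard inner product) onto the column space of P. Then i₊(I_m − QAQ) = m − r(P) + i₊(P*(I_m − A)P) and i₋(I_m − QAQ) = i₋(P*(I_m − A)P). In particular, if I_m − A ⪰ 0 then I_m − QAQ ⪰ 0, and if I_m − A ≻ 0 then I_m − QAQ ≻ 0. -/
/-!
Write `q` for the orthogonal projection onto `U = range P` and `g x = re ⟪(1 - A) x, x⟫`. Since
`‖x‖² = ‖x - q x‖² + ‖q x‖²`, the form of `1 - QAQ` is `x ↦ ‖x - q x‖² + g (q x)`, and the form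
of `Pᴴ (1 - A) P` is `y ↦ g (P y)`. The index `i₊` (resp. `i₋`) of a Hermitian matrix is the
largest dimension of a subspace on which its form is positive (resp. negative) away from `0`:
spans of eigenvectors realise it, and a subspace on which the form is `≤ 0` bounds it. Such
subspaces move between the two forms: a positive subspace `W` of `Pᴴ (1 - A) P` gives
`P W ⊕ Uᗮ` for `1 - QAQ`, and a positive subspace `W` of `1 - QAQ` gives `ψ (W ⊓ U)`, where
`P ψ = q`; negative subspaces move by `P` and `ψ` alone. Counting dimensions gives both index
formulas, and the definiteness statements can be read off the form of `1 - QAQ`.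
-/

open Matrix ComplexOrder

open Module Submodule RCLike InnerProductSpace

section PosIndex

variable (K : Type*) {E F : Type*} [Field K] [AddCommGroup E] [Module K E]
  [AddCommGroup F] [Module K F]

/-- `k` is the positive index of inertia of `f`. -/
def IsPosIndex (f : E → ℝ) (k : ℕ) : Prop :=
  IsGreatest {d | ∃ W : Submodule K E, finrank K W = d ∧ ∀ x ∈ W, x ≠ 0 → 0 < f x} k

variable {K}

lemma IsPosIndex.of_pos_of_nonpos [FiniteDimensional K E] {f : E → ℝ} (W V : Submodule K E)
    (hW : ∀ x ∈ W, x ≠ 0 → 0 < f x) (hV : ∀ x ∈ V, f x ≤ 0)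
    (hdim : finrank K W + finrank K V = finrank K E) : IsPosIndex K f (finrank K W) := by
  refine ⟨⟨W, rfl, hW⟩, ?_⟩
  rintro _ ⟨W', rfl, hW'⟩
  have hdisj : Disjoint W' V := disjoint_def.2 fun x hxW hxV =>
    by_contra fun hx0 => (hW' x hxW hx0).not_ge (hV x hxV)
  have := finrank_add_finrank_le_of_disjoint hdisj
  omega

lemma IsPosIndex.finrank_le_of_pos_comp {f : E → ℝ} {k : ℕ} (hk : IsPosIndex K f k)
    (hf0 : f 0 = 0) (φ : F →ₗ[K] E) (hφ : ∀ x, x ≠ 0 → 0 < f (φ x)) : finrank K F ≤ k := by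
  have hinj : Function.Injective φ := by
    refine (injective_iff_map_eq_zero φ).2 fun x hx => ?_
    by_contra hx0
    simpa [hx, hf0] using hφ x hx0
  rw [← LinearMap.finrank_range_of_inj hinj]
  refine hk.2 ⟨_, rfl, ?_⟩
  rintro _ ⟨x, rfl⟩ hx
  exact hφ x (by rintro rfl; simp at hx)

end PosIndex

namespace OrthonormalBasis

variable {𝕜 E ι : Type*} [RCLike 𝕜] [NormedAddCommGroup E] [InnerProductSpace 𝕜 E] [Fintype ι]
  {T : E →ₗ[𝕜] E} (b : OrthonormalBasis ι 𝕜 E) {μ : ι → ℝ}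

lemma finrank_span_image (s : Set ι) : finrank 𝕜 (span 𝕜 (b '' s)) = s.ncard := by
  classical
  rw [Set.image_eq_range, ← Nat.card_coe_set_eq, Nat.card_eq_fintype_card]
  exact finrank_span_eq_card (b.orthonormal.linearIndependent.comp _ Subtype.val_injective)

variable {b}

lemma inner_eq_zero_of_mem_span_image {s : Set ι} {x : E} (hx : x ∈ span 𝕜 (b '' s)) {i : ι}
    (hi : i ∉ s) : ⟪b i, x⟫_𝕜 = 0 := by
  refine mem_orthogonal_singleton_iff_inner_right.1 (span_le.2 ?_ hx)
  rintro _ ⟨j, hj, rfl⟩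
  exact mem_orthogonal_singleton_iff_inner_right.2 (b.orthonormal.inner_eq_zero (by grind))

lemma inner_map_of_eigenbasis (hb : ∀ i, T (b i) = (μ i : 𝕜) • b i) (x : E) (i : ι) :
    ⟪b i, T x⟫_𝕜 = μ i * ⟪b i, x⟫_𝕜 := by
  classical
  conv_lhs => rw [← b.sum_repr' x]
  simp [map_sum, hb, inner_sum, inner_smul_right, b.inner_eq_ite, mul_comm]

lemma re_inner_map_self_eq_sum (hb : ∀ i, T (b i) = (μ i : 𝕜) • b i) (x : E) :
    re ⟪T x, x⟫_𝕜 = ∑ i, μ i * ‖⟪b i, x⟫_𝕜‖ ^ 2 := by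
  rw [← b.sum_inner_mul_inner, map_sum]
  refine Finset.sum_congr rfl fun i _ => ?_
  rw [← inner_conj_symm, inner_map_of_eigenbasis hb, map_mul (starRingEnd 𝕜), conj_ofReal,
    mul_assoc, RCLike.conj_mul, ← ofReal_pow, ← ofReal_mul, ofReal_re]

lemma re_inner_map_self_pos_of_mem_span (hb : ∀ i, T (b i) = (μ i : 𝕜) • b i) {s : Set ι}
    (hs : ∀ i ∈ s, 0 < μ i) {x : E} (hx : x ∈ span 𝕜 (b '' s)) (hx0 : x ≠ 0) :
    0 < re ⟪T x, x⟫_𝕜 := by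
  obtain ⟨j, hj⟩ : ∃ j, ⟪b j, x⟫_𝕜 ≠ 0 := by
    by_contra! h
    rw [← b.sum_repr' x] at hx0
    simp [h] at hx0
  have hjs : j ∈ s := by_contra fun hjs => hj (inner_eq_zero_of_mem_span_image hx hjs)
  rw [re_inner_map_self_eq_sum hb]
  refine Finset.sum_pos' (fun i _ => ?_) ⟨j, Finset.mem_univ _,
    mul_pos (hs j hjs) (pow_pos (norm_pos_iff.2 hj) 2)⟩
  by_cases hi : i ∈ s
  · exact mul_nonneg (hs i hi).le (sq_nonneg _)
  · simp [inner_eq_zero_of_mem_span_image hx hi]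

lemma re_inner_map_self_nonpos_of_mem_span (hb : ∀ i, T (b i) = (μ i : 𝕜) • b i) {s : Set ι}
    (hs : ∀ i ∈ s, μ i ≤ 0) {x : E} (hx : x ∈ span 𝕜 (b '' s)) : re ⟪T x, x⟫_𝕜 ≤ 0 := by
  rw [re_inner_map_self_eq_sum hb]
  refine Finset.sum_nonpos fun i _ => ?_
  by_cases hi : i ∈ s
  · exact mul_nonpos_of_nonpos_of_nonneg (hs i hi) (sq_nonneg _)
  · simp [inner_eq_zero_of_mem_span_image hx hi]

theorem isPosIndex_re_inner_map_self (hb : ∀ i, T (b i) = (μ i : 𝕜) • b i) :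
    IsPosIndex 𝕜 (fun x => re ⟪T x, x⟫_𝕜) {i | 0 < μ i}.ncard := by
  have : FiniteDimensional 𝕜 E := b.toBasis.finiteDimensional_of_finite
  rw [← b.finrank_span_image]
  refine .of_pos_of_nonpos _ (span 𝕜 (b '' {i | 0 < μ i}ᶜ))
    (fun x hx hx0 => re_inner_map_self_pos_of_mem_span hb (fun _ hi => hi) hx hx0)
    (fun x hx => re_inner_map_self_nonpos_of_mem_span hb (fun _ hi => not_lt.1 hi) hx) ?_
  rw [b.finrank_span_image, b.finrank_span_image, Set.ncard_add_ncard_compl,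
    finrank_eq_card_basis b.toBasis, Nat.card_eq_fintype_card]

end OrthonormalBasis

section Compression

variable {𝕜 E F : Type*} [RCLike 𝕜] [NormedAddCommGroup E] [InnerProductSpace 𝕜 E]
  [NormedAddCommGroup F] [InnerProductSpace 𝕜 F]

/-- When `g` is the form of `1 - A`, this is the form of `1 - QAQ` for `Q` the projection onto
`U` (`re_inner_sub_starProjection_apply_eq_compressionForm`). -/
noncomputable def compressionForm (U : Submodule 𝕜 E) [U.HasOrthogonalProjection] (g : E → ℝ)
    (x : E) : ℝ :=
  ‖x - U.starProjection x‖ ^ 2 + g (U.starProjection x)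

section Projection

variable {U : Submodule 𝕜 E} [U.HasOrthogonalProjection] {g : E → ℝ}

lemma re_inner_sub_starProjection_apply_eq_compressionForm (a : E →ₗ[𝕜] E) (x : E) :
    re ⟪x - U.starProjection (a (U.starProjection x)), x⟫_𝕜
      = compressionForm U (fun y => re ⟪y - a y, y⟫_𝕜) x := by
  have hpyth := U.norm_sq_eq_add_norm_sq_starProjection x
  rw [starProjection_orthogonal_val] at hpyth
  rw [compressionForm, inner_sub_left, inner_sub_left, map_sub, map_sub,
    U.inner_starProjection_left_eq_right (a _) x, inner_self_eq_norm_sq, inner_self_eq_norm_sq]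
  linarith

lemma compressionForm_add_of_mem_of_mem_orthogonal {x u : E} (hx : x ∈ U) (hu : u ∈ Uᗮ) :
    compressionForm U g (x + u) = ‖u‖ ^ 2 + g x := by
  have : U.starProjection (x + u) = x := by
    rw [map_add, starProjection_eq_self_iff.2 hx, (starProjection_apply_eq_zero_iff _).2 hu,
      add_zero]
  rw [compressionForm, this, add_sub_cancel_left]

lemma compressionForm_of_mem {x : E} (hx : x ∈ U) : compressionForm U g x = g x := by
  simpa using compressionForm_add_of_mem_of_mem_orthogonal (g := g) hx (zero_mem Uᗮ)

lemma compressionForm_zero : compressionForm U g 0 = g 0 :=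
  compressionForm_of_mem (zero_mem U)

lemma apply_starProjection_le_compressionForm (x : E) :
    g (U.starProjection x) ≤ compressionForm U g x :=
  le_add_of_nonneg_left (sq_nonneg _)

lemma compressionForm_nonneg (hg : ∀ y, 0 ≤ g y) (x : E) : 0 ≤ compressionForm U g x :=
  add_nonneg (sq_nonneg _) (hg _)

lemma compressionForm_pos (hg0 : g 0 = 0) (hg : ∀ y, y ≠ 0 → 0 < g y) {x : E} (hx : x ≠ 0) :
    0 < compressionForm U g x := by
  rcases eq_or_ne (U.starProjection x) 0 with hqx | hqx
  · rw [compressionForm, hqx, sub_zero, hg0, add_zero]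
    positivity
  · exact add_pos_of_nonneg_of_pos (sq_nonneg _) (hg _ hqx)

end Projection

variable [FiniteDimensional 𝕜 E] {p : F →ₗ[𝕜] E} {g : E → ℝ} {k k' : ℕ}

lemma LinearMap.exists_apply_eq_starProjection (p : F →ₗ[𝕜] E) :
    ∃ ψ : E →ₗ[𝕜] F, ∀ x, p (ψ x) = (LinearMap.range p).starProjection x := by
  obtain ⟨s, hs⟩ := p.rangeRestrict.exists_rightInverse_of_surjective p.range_rangeRestrict
  refine ⟨s ∘ₗ (LinearMap.range p).orthogonalProjectionOnto.toLinearMap, fun x => ?_⟩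
  simpa using congrArg Subtype.val
    (LinearMap.congr_fun hs ((LinearMap.range p).orthogonalProjectionOnto x))

lemma finrank_orthogonal_add_le_of_isPosIndex_compressionForm [FiniteDimensional 𝕜 F]
    (hg0 : g 0 = 0) (hk : IsPosIndex 𝕜 (compressionForm (LinearMap.range p) g) k)
    (hk' : IsPosIndex 𝕜 (fun y => g (p y)) k') :
    finrank 𝕜 (LinearMap.range p)ᗮ + k' ≤ k := by
  obtain ⟨W, rfl, hW⟩ := hk'.1
  have hW_nonneg : ∀ y ∈ W, 0 ≤ g (p y) := fun y hy => by
    rcases eq_or_ne y 0 with rfl | hy0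
    · simp [hg0]
    · exact (hW y hy hy0).le
  have h := hk.finrank_le_of_pos_comp (compressionForm_zero.trans hg0)
    ((p ∘ₗ W.subtype).coprod (LinearMap.range p)ᗮ.subtype) fun ⟨y, u⟩ hyu => by
      simp only [LinearMap.coprod_apply, LinearMap.comp_apply, Submodule.subtype_apply]
      rw [compressionForm_add_of_mem_of_mem_orthogonal (LinearMap.mem_range_self p y) u.2]
      rcases eq_or_ne u 0 with rfl | hu0
      · have hy0 : y ≠ 0 := by rintro rfl; exact hyu rfl
        simpa using hW y y.2 (by simpa using hy0)
      · have hu : (u : E) ≠ 0 := by simpa using hu0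
        exact add_pos_of_pos_of_nonneg (by positivity) (hW_nonneg y y.2)
  rwa [Module.finrank_prod, add_comm] at h

lemma le_finrank_orthogonal_add_of_isPosIndex_compressionForm (hg0 : g 0 = 0)
    (hk : IsPosIndex 𝕜 (compressionForm (LinearMap.range p) g) k)
    (hk' : IsPosIndex 𝕜 (fun y => g (p y)) k') :
    k ≤ finrank 𝕜 (LinearMap.range p)ᗮ + k' := by
  obtain ⟨W, rfl, hW⟩ := hk.1
  obtain ⟨ψ, hψ⟩ := p.exists_apply_eq_starProjection
  set U := LinearMap.range p
  have h := hk'.finrank_le_of_pos_comp (by simpa using hg0) (ψ ∘ₗ (W ⊓ U).subtype)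
    fun x hx0 => by
      obtain ⟨hxW, hxU⟩ := x.2
      have := hW x hxW (by simpa using hx0)
      rw [compressionForm_of_mem hxU] at this
      simpa [hψ, starProjection_eq_self_iff.2 hxU] using this
  have := finrank_sup_add_finrank_inf_eq W U
  have := finrank_le (W ⊔ U)
  have := finrank_add_finrank_orthogonal U
  omega

theorem eq_finrank_orthogonal_add_of_isPosIndex_compressionForm [FiniteDimensional 𝕜 F]
    (hg0 : g 0 = 0) (hk : IsPosIndex 𝕜 (compressionForm (LinearMap.range p) g) k)
    (hk' : IsPosIndex 𝕜 (fun y => g (p y)) k') :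
    k = finrank 𝕜 (LinearMap.range p)ᗮ + k' :=
  le_antisymm (le_finrank_orthogonal_add_of_isPosIndex_compressionForm hg0 hk hk')
    (finrank_orthogonal_add_le_of_isPosIndex_compressionForm hg0 hk hk')

theorem eq_of_isPosIndex_neg_compressionForm (hg0 : g 0 = 0)
    (hk : IsPosIndex 𝕜 (fun x => -compressionForm (LinearMap.range p) g x) k)
    (hk' : IsPosIndex 𝕜 (fun y => -g (p y)) k') : k = k' := by
  obtain ⟨ψ, hψ⟩ := p.exists_apply_eq_starProjection
  refine le_antisymm ?_ ?_
  · obtain ⟨W, rfl, hW⟩ := hk.1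
    refine hk'.finrank_le_of_pos_comp (by simp [hg0]) (ψ ∘ₗ W.subtype) fun x hx0 => ?_
    have := hW x x.2 (by simpa using hx0)
    have := apply_starProjection_le_compressionForm (U := LinearMap.range p) (g := g) x
    simp only [LinearMap.comp_apply, Submodule.subtype_apply, hψ]
    linarith
  · obtain ⟨W, rfl, hW⟩ := hk'.1
    refine hk.finrank_le_of_pos_comp (by simp [compressionForm_zero, hg0]) (p ∘ₗ W.subtype)
      fun y hy0 => ?_
    simpa [compressionForm_of_mem (LinearMap.mem_range_self p _)] using
      hW y y.2 (by simpa using hy0)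

end Compression

section Matrix

variable {𝕜 ι : Type*} [RCLike 𝕜] [Fintype ι] [DecidableEq ι]

lemma Matrix.IsHermitian.toEuclideanLin_eigenvectorBasis {H : Matrix ι ι 𝕜} (hH : H.IsHermitian)
    (i : ι) :
    toEuclideanLin H (hH.eigenvectorBasis i) = (hH.eigenvalues i : 𝕜) • hH.eigenvectorBasis i := by
  rw [← RCLike.real_smul_eq_coe_smul]
  exact congrArg (WithLp.toLp 2) (hH.mulVec_eigenvectorBasis i)

lemma Matrix.IsHermitian.posDef_iff_re_inner_pos {H : Matrix ι ι 𝕜} (hH : H.IsHermitian) :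
    H.PosDef ↔ ∀ x : EuclideanSpace 𝕜 ι, x ≠ 0 → 0 < re ⟪toEuclideanLin H x, x⟫_𝕜 := by
  have hre (x : EuclideanSpace 𝕜 ι) :
      re ⟪toEuclideanLin H x, x⟫_𝕜 = re (star x.ofLp ⬝ᵥ (H *ᵥ x.ofLp)) := by
    rw [inner_re_symm, EuclideanSpace.inner_eq_star_dotProduct, dotProduct_comm]
    rfl
  have hpos (x : ι → 𝕜) : 0 < star x ⬝ᵥ (H *ᵥ x) ↔ 0 < re (star x ⬝ᵥ (H *ᵥ x)) := by
    rw [RCLike.pos_iff, hH.im_star_dotProduct_mulVec_self, eq_self, and_true]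
  simp only [posDef_iff_dotProduct_mulVec, hH, true_and, hre, hpos]
  exact ⟨fun h x hx => h (by simpa using hx), fun h x hx => h (WithLp.toLp 2 x) (by simpa using hx)⟩

lemma Matrix.rank_eq_finrank_range_toEuclideanLin {m n : Type*} [Fintype m] [Fintype n]
    [DecidableEq n] (P : Matrix m n 𝕜) :
    P.rank = finrank 𝕜 (LinearMap.range (toEuclideanLin P)) :=
  rank_eq_finrank_range_toLin P (PiLp.basisFun 2 𝕜 m) (PiLp.basisFun 2 𝕜 n)

lemma Matrix.inner_toEuclideanLin_conjTranspose_mul_mul {m n : Type*} [Fintype m] [Fintype n]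
    [DecidableEq m] [DecidableEq n] (P : Matrix m n 𝕜) (B : Matrix m m 𝕜) (y : EuclideanSpace 𝕜 n) :
    ⟪toEuclideanLin (Pᴴ * B * P) y, y⟫_𝕜
      = ⟪toEuclideanLin B (toEuclideanLin P y), toEuclideanLin P y⟫_𝕜 := by
  simp [toEuclideanLin_conjTranspose_eq_adjoint, LinearMap.adjoint_inner_left]

lemma Matrix.re_inner_toEuclideanLin_one_sub_mul_mul {Q : Matrix ι ι 𝕜}
    {U : Submodule 𝕜 (EuclideanSpace 𝕜 ι)} (hQ : toEuclideanLin Q = U.starProjection.toLinearMap)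
    (A : Matrix ι ι 𝕜) (x : EuclideanSpace 𝕜 ι) :
    re ⟪toEuclideanLin (1 - Q * A * Q) x, x⟫_𝕜
      = compressionForm U (fun y => re ⟪toEuclideanLin (1 - A) y, y⟫_𝕜) x := by
  have hQAQ : toEuclideanLin (1 - Q * A * Q) x
      = x - U.starProjection (toEuclideanLin A (U.starProjection x)) := by
    simp [hQ]
  have hA y : toEuclideanLin (1 - A) y = y - toEuclideanLin A y := by simp
  simp only [hQAQ, hA, re_inner_sub_starProjection_apply_eq_compressionForm]

end Matrix

lemma toEuclideanLin_projMat {m : ℕ} (U : Submodule ℂ (EuclideanSpace ℂ (Fin m))) :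
    toEuclideanLin (projMat U) = U.starProjection.toLinearMap :=
  LinearEquiv.apply_symm_apply _ _

lemma Matrix.IsHermitian.isPosIndex_iPos {ι : Type} [Fintype ι] [DecidableEq ι]
    {H : Matrix ι ι ℂ} (hH : H.IsHermitian) :
    IsPosIndex ℂ (fun x => re ⟪toEuclideanLin H x, x⟫_ℂ) (iPos H) := by
  rw [iPos, dif_pos hH]
  exact hH.eigenvectorBasis.isPosIndex_re_inner_map_self hH.toEuclideanLin_eigenvectorBasis

lemma Matrix.IsHermitian.isPosIndex_iNeg {ι : Type} [Fintype ι] [DecidableEq ι]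
    {H : Matrix ι ι ℂ} (hH : H.IsHermitian) :
    IsPosIndex ℂ (fun x => -re ⟪toEuclideanLin H x, x⟫_ℂ) (iNeg H) := by
  have hb i : (-toEuclideanLin H) (hH.eigenvectorBasis i)
      = ((-hH.eigenvalues i : ℝ) : ℂ) • hH.eigenvectorBasis i := by
    simp [hH.toEuclideanLin_eigenvectorBasis]
  have h := hH.eigenvectorBasis.isPosIndex_re_inner_map_self (μ := fun i => -hH.eigenvalues i) hb
  simp only [LinearMap.neg_apply, inner_neg_left, map_neg, neg_pos] at h
  rwa [iNeg, dif_pos hH]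

theorem stmt19 {m n : ℕ} (A : Matrix (Fin m) (Fin m) ℂ) (hA : A.IsHermitian)
    (P : Matrix (Fin m) (Fin n) ℂ)
    (Q : Matrix (Fin m) (Fin m) ℂ)
    (hQ : Q = projMat (LinearMap.range (Matrix.toEuclideanLin P))) :
    iPos (1 - Q * A * Q) = m - P.rank + iPos (Pᴴ * (1 - A) * P) ∧
    iNeg (1 - Q * A * Q) = iNeg (Pᴴ * (1 - A) * P) ∧
    ((1 - A).PosSemidef → (1 - Q * A * Q).PosSemidef) ∧
    ((1 - A).PosDef → (1 - Q * A * Q).PosDef) := by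
  have hq := hQ ▸ toEuclideanLin_projMat (LinearMap.range (toEuclideanLin P))
  have hQH : Q.IsHermitian := isSymmetric_toEuclideanLin_iff.1 (hq ▸ starProjection_isSymmetric _)
  have hB : (1 - A).IsHermitian := isHermitian_one.sub hA
  have hL : (1 - Q * A * Q).IsHermitian := isHermitian_one.sub <| by
    simpa [hQH.eq] using isHermitian_conjTranspose_mul_mul Q hA
  have hR : (Pᴴ * (1 - A) * P).IsHermitian := isHermitian_conjTranspose_mul_mul P hB
  have hg0 : re ⟪toEuclideanLin (1 - A) 0, 0⟫_ℂ = 0 := by simp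
  have hrank : P.rank + finrank ℂ (LinearMap.range (toEuclideanLin P))ᗮ = m := by
    rw [P.rank_eq_finrank_range_toEuclideanLin, finrank_add_finrank_orthogonal,
      finrank_euclideanSpace_fin]
  refine ⟨?_, ?_, fun h => ?_, fun h => ?_⟩
  · have := eq_finrank_orthogonal_add_of_isPosIndex_compressionForm hg0
      (by simpa only [re_inner_toEuclideanLin_one_sub_mul_mul hq] using hL.isPosIndex_iPos)
      (by simpa only [inner_toEuclideanLin_conjTranspose_mul_mul] using hR.isPosIndex_iPos)
    omega
  · exact eq_of_isPosIndex_neg_compressionForm hg0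
      (by simpa only [re_inner_toEuclideanLin_one_sub_mul_mul hq] using hL.isPosIndex_iNeg)
      (by simpa only [inner_toEuclideanLin_conjTranspose_mul_mul] using hR.isPosIndex_iNeg)
  · rw [← isPositive_toEuclideanLin_iff] at h ⊢
    refine ⟨isSymmetric_toEuclideanLin_iff.2 hL, fun x => ?_⟩
    rw [re_inner_toEuclideanLin_one_sub_mul_mul hq]
    exact compressionForm_nonneg h.re_inner_nonneg_left x
  · refine hL.posDef_iff_re_inner_pos.2 fun x hx => ?_
    rw [re_inner_toEuclideanLin_one_sub_mul_mul hq]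
    exact compressionForm_pos hg0 (hB.posDef_iff_re_inner_pos.1 h) hx
end
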